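/- Let g:[a,b]→ℝ be a derivator with D_g ∩ [a,b) = {x₁,…,x_{n−1}} finite, x₁<⋯<x_{n−1}, and set x₀=a, x_n=b. Then the restriction map f ↦ (f|_{[x₀,x₁]}, f|_{(x₁,x₂]}, …, f|_{(x_{n−1},x_n]}) is an isometric isomorphism from UC_g([a,b]) onto the direct sum UC_{g^C}([x₀,x₁]) ⊕ ⨁_{j=2}^n UC_{g^C}((x_{j−1},x_j]), where the direct sum carries the max of the component sup norms. -/

import Mathlib

open MeasureTheory Set Filter

/-- Uniform continuity of `f` on the set `s` with respect to the pseudometric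
induced by `h`. -/
def UnifContRel (h : ℝ → ℝ) (s : Set ℝ) (f : ℝ → ℝ) : Prop :=
  ∀ ε > 0, ∃ δ > 0, ∀ u ∈ s, ∀ v ∈ s, |h u - h v| < δ → |f u - f v| < ε

/-- Uniform `g`-continuity of `f` on `[a,b]`. -/
def UnifGCont (g : ℝ → ℝ) (a b : ℝ) (f : ℝ → ℝ) : Prop :=
  UnifContRel g (Set.Icc a b) f

/-- The continuous part `g^C = g − g^B` of a derivator `g` whose discontinuity points
in `[a,b)` are `x 1 < ⋯ < x (n-1)`: here `g^B t = Σ_{i : x i < t} Δg(x i)`. -/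
noncomputable def gCpart (g : ℝ → ℝ) (x : ℕ → ℝ) (n : ℕ) (t : ℝ) : ℝ :=
  g t - ∑ i ∈ Finset.Icc 1 (n - 1),
    (if x i < t then Function.rightLim g (x i) - g (x i) else 0)

/-- With `D_g ∩ [a,b) = {x 1, …, x (n−1)}` finite, `x 0 = a`, `x n = b`, the
restriction map `f ↦ (f|[x₀,x₁], f|(x₁,x₂], …, f|(x_{n−1},x_n])` is an isometric
isomorphism from `UC_g([a,b])` onto
`UC_{g^C}([x₀,x₁]) ⊕ ⨁_{j=2}^n UC_{g^C}((x_{j−1},x_j])` with the max norm: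
it is well defined, surjective (an inverse gluing exists), and sup-norm bounds
correspond (isometry). (Injectivity is immediate since the pieces cover `[a,b]`.) -/
theorem restriction_isometric_isomorphism
    (a b : ℝ) (hab : a ≤ b) (g : ℝ → ℝ)
    (hmono : MonotoneOn g (Set.Icc a b))
    (hlc : ∀ x ∈ Set.Ioc a b, ContinuousWithinAt g (Set.Iio x) x)
    (n : ℕ) (hn : 0 < n) (x : ℕ → ℝ)
    (hx0 : x 0 = a) (hxn : x n = b)
    (hxlt : ∀ i, 1 ≤ i → i < n - 1 → x i < x (i + 1))
    (hxmem : ∀ i, 1 ≤ i → i ≤ n - 1 → x i ∈ Set.Ico a b)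
    (hD : {t ∈ Set.Ico a b | g t < Function.rightLim g t} =
      {y | ∃ i, 1 ≤ i ∧ i ≤ n - 1 ∧ y = x i}) :
    -- well defined: restrictions of a `UC_g` function are uniformly `g^C`-continuous
    (∀ f : ℝ → ℝ, UnifGCont g a b f →
      UnifContRel (gCpart g x n) (Set.Icc (x 0) (x 1)) f ∧
      ∀ j, 2 ≤ j → j ≤ n →
        UnifContRel (gCpart g x n) (Set.Ioc (x (j - 1)) (x j)) f) ∧
    -- surjective: any compatible family of pieces glues to a `UC_g` function
    (∀ F : ℕ → ℝ → ℝ,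
      UnifContRel (gCpart g x n) (Set.Icc (x 0) (x 1)) (F 1) →
      (∀ j, 2 ≤ j → j ≤ n →
        UnifContRel (gCpart g x n) (Set.Ioc (x (j - 1)) (x j)) (F j)) →
      ∃ f : ℝ → ℝ, UnifGCont g a b f ∧
        Set.EqOn f (F 1) (Set.Icc (x 0) (x 1)) ∧
        ∀ j, 2 ≤ j → j ≤ n → Set.EqOn f (F j) (Set.Ioc (x (j - 1)) (x j))) ∧
    -- isometry: the sup norm equals the max of the sup norms of the pieces
    (∀ f : ℝ → ℝ, ∀ C : ℝ,
      (∀ t ∈ Set.Icc a b, |f t| ≤ C) ↔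
        ((∀ t ∈ Set.Icc (x 0) (x 1), |f t| ≤ C) ∧
          ∀ j, 2 ≤ j → j ≤ n → ∀ t ∈ Set.Ioc (x (j - 1)) (x j), |f t| ≤ C)) := by
  classical
  -- consecutive points are increasing
  have hstep : ∀ i, 1 ≤ i → i < n → x i < x (i + 1) := by
    intro i h1 h2
    rcases Nat.lt_or_ge i (n - 1) with h | h
    · exact hxlt i h1 h
    · have hi1 : i + 1 = n := by omega
      have hb := (hxmem i h1 (by omega)).2
      rw [hi1, hxn]
      exact hb
  -- monotonicity of the points
  have hmonox : ∀ j i, 1 ≤ i → i ≤ j → j ≤ n → x i ≤ x j := by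
    intro j
    induction j with
    | zero => intro i h1 h2 _; exact absurd (le_trans h1 h2) (by omega)
    | succ k ih =>
      intro i h1 h2 h3
      rcases Nat.lt_or_ge i (k + 1) with h | h
      · have hik : i ≤ k := by omega
        have h1k : 1 ≤ k := le_trans h1 hik
        exact le_trans (ih i h1 hik (by omega)) (le_of_lt (hstep k h1k (by omega)))
      · have hik : i = k + 1 := by omega
        rw [hik]
  have hxab : ∀ i, 1 ≤ i → i ≤ n → x i ∈ Set.Icc a b := by
    intro i h1 h2
    rcases Nat.lt_or_ge i n with h | h
    · have := hxmem i h1 (by omega)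
      exact ⟨this.1, this.2.le⟩
    · have hin : i = n := by omega
      rw [hin, hxn]
      exact ⟨hab, le_rfl⟩
  have hax1 : a ≤ x 1 := (hxab 1 le_rfl hn).1
  have hS1sub : Set.Icc (x 0) (x 1) ⊆ Set.Icc a b := by
    rw [hx0]
    exact Set.Icc_subset_Icc le_rfl (hxab 1 le_rfl hn).2
  have hSjsub : ∀ j, 2 ≤ j → j ≤ n → Set.Ioc (x (j - 1)) (x j) ⊆ Set.Icc a b := by
    intro j h2 hjn t ht
    have h1 : a ≤ x (j - 1) := (hxab (j - 1) (by omega) (by omega)).1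
    exact ⟨le_trans h1 ht.1.le, le_trans ht.2 (hxab j (by omega) hjn).2⟩
  -- on each piece the jump-part is constant, so `g^C`-differences equal `g`-differences
  have key1 : ∀ u ∈ Set.Icc (x 0) (x 1), ∀ v ∈ Set.Icc (x 0) (x 1),
      gCpart g x n u - gCpart g x n v = g u - g v := by
    intro u hu v hv
    have hz : ∀ t ∈ Set.Icc (x 0) (x 1),
        (∑ i ∈ Finset.Icc 1 (n - 1),
          (if x i < t then Function.rightLim g (x i) - g (x i) else 0)) = 0 := by
      intro t ht
      apply Finset.sum_eq_zero
      intro i hi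
      simp only [Finset.mem_Icc] at hi
      rw [if_neg (not_lt.mpr (le_trans ht.2 (hmonox i 1 le_rfl hi.1 (by omega))))]
    simp only [gCpart, hz u hu, hz v hv]
    ring
  have keyj : ∀ j, 2 ≤ j → j ≤ n → ∀ u ∈ Set.Ioc (x (j - 1)) (x j),
      ∀ v ∈ Set.Ioc (x (j - 1)) (x j),
      gCpart g x n u - gCpart g x n v = g u - g v := by
    intro j h2 hjn u hu v hv
    have hiff : ∀ t ∈ Set.Ioc (x (j - 1)) (x j), ∀ i, 1 ≤ i → i ≤ n - 1 →
        ((x i < t) ↔ i ≤ j - 1) := by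
      intro t ht i h1 hin
      constructor
      · intro hlt
        by_contra hc
        exact absurd (le_trans ht.2 (hmonox i j (by omega) (by omega) (by omega)))
          (not_le.mpr hlt)
      · intro hij
        exact lt_of_le_of_lt (hmonox (j - 1) i h1 hij (by omega)) ht.1
    have hsum : (∑ i ∈ Finset.Icc 1 (n - 1),
          (if x i < u then Function.rightLim g (x i) - g (x i) else 0)) =
        (∑ i ∈ Finset.Icc 1 (n - 1),
          (if x i < v then Function.rightLim g (x i) - g (x i) else 0)) := by
      apply Finset.sum_congr rfl
      intro i hi
      simp only [Finset.mem_Icc] at hi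
      by_cases h : i ≤ j - 1
      · rw [if_pos ((hiff u hu i hi.1 hi.2).2 h), if_pos ((hiff v hv i hi.1 hi.2).2 h)]
      · rw [if_neg (fun hc => h ((hiff u hu i hi.1 hi.2).1 hc)),
          if_neg (fun hc => h ((hiff v hv i hi.1 hi.2).1 hc))]
    simp only [gCpart, hsum]
    ring
  -- the pieces cover `[a,b]`
  have hcov : ∀ t ∈ Set.Icc a b, t ∈ Set.Icc (x 0) (x 1) ∨
      ∃ j, 2 ≤ j ∧ j ≤ n ∧ t ∈ Set.Ioc (x (j - 1)) (x j) := by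
    intro t ht
    by_cases h1 : t ≤ x 1
    · exact Or.inl ⟨by rw [hx0]; exact ht.1, h1⟩
    · have hex : ∃ j, t ≤ x j := ⟨n, by rw [hxn]; exact ht.2⟩
      have hspec : t ≤ x (Nat.find hex) := Nat.find_spec hex
      have hjn : Nat.find hex ≤ n := Nat.find_min' hex (by rw [hxn]; exact ht.2)
      have hj2 : 2 ≤ Nat.find hex := by
        rcases Nat.lt_or_ge (Nat.find hex) 2 with h | h
        · exfalso
          have h0 : x (Nat.find hex) ≤ x 1 := by
            rcases Nat.lt_or_ge (Nat.find hex) 1 with h' | h'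
            · have h'' : Nat.find hex = 0 := by omega
              rw [h'', hx0]; exact hax1
            · have h'' : Nat.find hex = 1 := by omega
              rw [h'']
          exact h1 (le_trans hspec h0)
        · exact h
      exact Or.inr ⟨Nat.find hex, hj2, hjn,
        not_le.mp (Nat.find_min hex (by omega)), hspec⟩
  -- the right limit at a jump point bounds `g` to the right
  have hrll : ∀ m, 1 ≤ m → m ≤ n - 1 → ∀ v ∈ Set.Icc a b, x m < v →
      Function.rightLim g (x m) ≤ g v := by
    intro m h1 h2 v hv hxv
    have hcm : x m ∈ Set.Ico a b := hxmem m h1 h2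
    have hsub : Set.Ioo (x m) b ⊆ Set.Icc a b := fun s hs =>
      ⟨le_trans hcm.1 hs.1.le, hs.2.le⟩
    have hne : (Set.Ioo (x m) b).Nonempty := Set.nonempty_Ioo.mpr hcm.2
    have hbdd : BddBelow (g '' Set.Ioo (x m) b) := by
      refine ⟨g (x m), ?_⟩
      rintro y ⟨s, hs, rfl⟩
      exact hmono ⟨hcm.1, hcm.2.le⟩ (hsub hs) hs.1.le
    have htend := MonotoneOn.tendsto_nhdsWithin_Ioo_right hne (hmono.mono hsub) hbdd
    have hrl : Function.rightLim g (x m) = sInf (g '' Set.Ioo (x m) b) :=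
      rightLim_eq_of_tendsto (h := nhdsGT_neBot (x m)) htend
    rw [hrl]
    have hty : x m < (x m + v) / 2 ∧ (x m + v) / 2 < v := ⟨by linarith, by linarith⟩
    have htb : (x m + v) / 2 ∈ Set.Ioo (x m) b := ⟨hty.1, lt_of_lt_of_le hty.2 hv.2⟩
    calc sInf (g '' Set.Ioo (x m) b) ≤ g ((x m + v) / 2) := csInf_le hbdd ⟨_, htb, rfl⟩
      _ ≤ g v := hmono (hsub htb) hv hty.2.le
  -- jumps are positive
  have hjump : ∀ i, 1 ≤ i → i ≤ n - 1 → 0 < Function.rightLim g (x i) - g (x i) := by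
    intro i h1 h2
    have hmem : x i ∈ {t ∈ Set.Ico a b | g t < Function.rightLim g t} := by
      rw [hD]; exact ⟨i, h1, h2, rfl⟩
    exact sub_pos.mpr hmem.2
  -- points separated by a jump have `g`-distance at least the jump
  have hsep : ∀ u ∈ Set.Icc a b, ∀ v ∈ Set.Icc a b, ∀ m, 1 ≤ m → m ≤ n - 1 →
      u ≤ x m → x m < v →
      Function.rightLim g (x m) - g (x m) ≤ g v - g u := by
    intro u hu v hv m h1 h2 hum hmv
    have h3 : g u ≤ g (x m) := hmono hu (hxab m h1 (by omega)) hum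
    have h4 : Function.rightLim g (x m) ≤ g v := hrll m h1 h2 v hv hmv
    linarith
  refine ⟨?_, ?_, ?_⟩
  · -- well definedness
    intro f hf
    constructor
    · intro ε hε
      obtain ⟨δ, hδ, hs⟩ := hf ε hε
      refine ⟨δ, hδ, fun u hu v hv h => hs u (hS1sub hu) v (hS1sub hv) ?_⟩
      rwa [key1 u hu v hv] at h
    · intro j h2 hjn ε hε
      obtain ⟨δ, hδ, hs⟩ := hf ε hε
      refine ⟨δ, hδ, fun u hu v hv h =>
        hs u (hSjsub j h2 hjn hu) v (hSjsub j h2 hjn hv) ?_⟩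
      rwa [keyj j h2 hjn u hu v hv] at h
  · -- gluing
    intro F hF1 hFs
    set f : ℝ → ℝ := fun t =>
      if t ≤ x 1 then F 1 t
      else if h : ∃ j, t ≤ x j then F (Nat.find h) t else 0 with hfdef
    have heq1 : Set.EqOn f (F 1) (Set.Icc (x 0) (x 1)) := by
      intro t ht
      simp only [hfdef]
      rw [if_pos ht.2]
    have heqj : ∀ j, 2 ≤ j → j ≤ n → Set.EqOn f (F j) (Set.Ioc (x (j - 1)) (x j)) := by
      intro j h2 hjn t ht
      have hx1t : x 1 ≤ x (j - 1) := hmonox (j - 1) 1 le_rfl (by omega) (by omega)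
      have hnot : ¬ t ≤ x 1 := not_le.mpr (lt_of_le_of_lt hx1t ht.1)
      have hex : ∃ k, t ≤ x k := ⟨j, ht.2⟩
      have hfind : Nat.find hex = j := by
        have hk := Nat.find_spec hex
        refine le_antisymm (Nat.find_min' hex ht.2) ?_
        rcases Nat.lt_or_ge (Nat.find hex) j with h | h
        · exfalso
          rcases Nat.eq_zero_or_pos (Nat.find hex) with h0 | h0
          · rw [h0, hx0] at hk
            have ha1 : a ≤ x (j - 1) := (hxab (j - 1) (by omega) (by omega)).1
            have := ht.1
            linarith
          · have hle : x (Nat.find hex) ≤ x (j - 1) :=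
              hmonox (j - 1) (Nat.find hex) h0 (by omega) (by omega)
            have := ht.1
            linarith
        · exact h
      simp only [hfdef]
      rw [if_neg hnot, dif_pos hex, hfind]
    have huc : UnifGCont g a b f := by
      intro ε hε
      obtain ⟨δ1, hδ1pos, hδ1⟩ := hF1 ε hε
      have hFj' : ∀ j, ∃ δ, 0 < δ ∧ (2 ≤ j → j ≤ n →
          ∀ u ∈ Set.Ioc (x (j - 1)) (x j), ∀ v ∈ Set.Ioc (x (j - 1)) (x j),
            |gCpart g x n u - gCpart g x n v| < δ → |F j u - F j v| < ε) := by
        intro j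
        by_cases h : 2 ≤ j ∧ j ≤ n
        · obtain ⟨δ, hp, hs⟩ := hFs j h.1 h.2 ε hε
          exact ⟨δ, hp, fun _ _ => hs⟩
        · exact ⟨1, one_pos, fun h1 h2 => absurd ⟨h1, h2⟩ h⟩
      choose δf hδfpos hδf using hFj'
      set Δ' : ℕ → ℝ := fun j =>
        if 1 ≤ j ∧ j ≤ n - 1 then Function.rightLim g (x j) - g (x j) else 1 with hΔ'
      have hΔ'pos : ∀ j, 0 < Δ' j := by
        intro j
        simp only [hΔ']
        split_ifs with h
        · exact hjump j h.1 h.2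
        · exact one_pos
      have hnem : (Finset.Icc 1 n).Nonempty := ⟨1, by simp [Finset.mem_Icc]; omega⟩
      set δ := min δ1 ((Finset.Icc 1 n).inf' hnem fun j => min (δf j) (Δ' j)) with hδdef
      have hδpos : 0 < δ := by
        apply lt_min hδ1pos
        rw [Finset.lt_inf'_iff]
        intro j _
        exact lt_min (hδfpos j) (hΔ'pos j)
      refine ⟨δ, hδpos, ?_⟩
      intro u hu v hv hguv
      have hδΔ : ∀ m, 1 ≤ m → m ≤ n - 1 → δ ≤ Δ' m := by
        intro m h1 h2
        refine le_trans (min_le_right _ _) (le_trans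
          (Finset.inf'_le _ (by simp only [Finset.mem_Icc]; omega)) (min_le_right _ _))
      have hδf' : ∀ m, 1 ≤ m → m ≤ n → δ ≤ δf m := by
        intro m h1 h2
        refine le_trans (min_le_right _ _) (le_trans
          (Finset.inf'_le _ (by simp only [Finset.mem_Icc]; omega)) (min_le_left _ _))
      have hsep' : ∀ u' ∈ Set.Icc a b, ∀ v' ∈ Set.Icc a b, ∀ m, 1 ≤ m → m ≤ n - 1 →
          u' ≤ x m → x m < v' → |g u' - g v'| < δ → False := by
        intro u' hu' v' hv' m h1 h2 hum hmv hlt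
        have h3 := hsep u' hu' v' hv' m h1 h2 hum hmv
        have h4 := hδΔ m h1 h2
        have h5 : Δ' m = Function.rightLim g (x m) - g (x m) := by
          simp only [hΔ', if_pos (And.intro h1 h2)]
        have h6 : g v' - g u' ≤ |g u' - g v'| := by
          rw [abs_sub_comm]; exact le_abs_self _
        linarith
      rcases hcov u hu with hu1 | ⟨j, hj2, hjn, huj⟩ <;>
        rcases hcov v hv with hv1 | ⟨k, hk2, hkn, hvk⟩
      · rw [heq1 hu1, heq1 hv1]
        apply hδ1 u hu1 v hv1
        rw [key1 u hu1 v hv1]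
        exact lt_of_lt_of_le hguv (min_le_left _ _)
      · exfalso
        exact hsep' u hu v hv 1 le_rfl (by omega) hu1.2
          (lt_of_le_of_lt (hmonox (k - 1) 1 le_rfl (by omega) (by omega)) hvk.1) hguv
      · exfalso
        rw [abs_sub_comm] at hguv
        exact hsep' v hv u hu 1 le_rfl (by omega) hv1.2
          (lt_of_le_of_lt (hmonox (j - 1) 1 le_rfl (by omega) (by omega)) huj.1) hguv
      · rcases lt_trichotomy j k with hlt | heqjk | hgt
        · exfalso
          exact hsep' u hu v hv j (by omega) (by omega) huj.2
            (lt_of_le_of_lt (hmonox (k - 1) j (by omega) (by omega) (by omega)) hvk.1) hguv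
        · subst heqjk
          rw [heqj j hj2 hjn huj, heqj j hj2 hjn hvk]
          apply hδf j hj2 hjn u huj v hvk
          rw [keyj j hj2 hjn u huj v hvk]
          exact lt_of_lt_of_le hguv (hδf' j (by omega) hjn)
        · exfalso
          rw [abs_sub_comm] at hguv
          exact hsep' v hv u hu k (by omega) (by omega) hvk.2
            (lt_of_le_of_lt (hmonox (j - 1) k (by omega) (by omega) (by omega)) huj.1) hguv
    exact ⟨f, huc, heq1, heqj⟩
  · -- isometry
    intro f C
    constructor
    · intro H
      exact ⟨fun t ht => H t (hS1sub ht), fun j h2 hjn t ht => H t (hSjsub j h2 hjn ht)⟩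
    · rintro ⟨H1, H2⟩ t ht
      rcases hcov t ht with h | ⟨j, h2, hjn, hmem⟩
      · exact H1 t h
      · exact H2 j h2 hjn t hmem
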